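/- arXiv:1703.09011 — 4 statements merged into one kernel-verified Lean document; each statement's English description precedes it below -/
import Mathlib

section
/- Let X and Y be identically distributed random variables taking values in the positive integers, coupled so that P(X = b·Y) ≥ 1 − p for some integer b ≥ 2 and p ∈ (0,1]. Then E[X] ≥ p·(b^{1/p} − 1)/(b − 1). -/
/-!
Put `q k = P(X ≥ b^k)`. On the event `X = b·Y` we have `Y ≥ b^k → X ≥ b^(k+1)`, and `Y` has the
law of `X`, so `q (k+1) ≥ q k - p`; with `q 0 = 1` this gives `q k ≥ 1 - k p`. Since `X ≥ 1`, `X`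
dominates the total width `∑_{b^k ≤ X} (b^k - b^(k-1))` of the layers `[b^(k-1), b^k)` below it
(layer `0` being `[0, 1)`), so `E[X] ≥ ∑_{k ≤ ⌊1/p⌋} (b^k - b^(k-1)) (1 - k p)`. This closed-form
sum dominates `p (b^(1/p) - 1)/(b - 1)` because `t ↦ b^t` lies below its chord on
`[⌊1/p⌋, ⌊1/p⌋ + 1]`.
-/

open MeasureTheory ProbabilityTheory Finset
open scoped ENNReal

def powDiff (b : ℕ) : ℕ → ℕ
  | 0 => 1
  | k + 1 => b ^ (k + 1) - b ^ k

section powDiff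

variable {b : ℕ}

lemma cast_powDiff_succ (hb : 1 ≤ b) (k : ℕ) :
    (powDiff b (k + 1) : ℝ) = (b : ℝ) ^ (k + 1) - (b : ℝ) ^ k := by
  rw [powDiff, Nat.cast_sub (Nat.pow_le_pow_right hb k.le_succ)]
  push_cast
  rfl

lemma sum_range_succ_powDiff (hb : 1 ≤ b) (m : ℕ) :
    ∑ k ∈ range (m + 1), powDiff b k = b ^ m := by
  rw [sum_range_succ']
  simp only [powDiff]
  rw [sum_range_tsub (pow_right_mono₀ hb), pow_zero]
  have := Nat.one_le_pow m b hb
  omega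

lemma sum_range_succ_powDiff_ite_le (hb : 1 ≤ b) {n : ℕ} (hn : 1 ≤ n) (m : ℕ) :
    ∑ k ∈ range (m + 1), (if b ^ k ≤ n then powDiff b k else 0) ≤ n := by
  induction m with
  | zero => simp [powDiff, hn]
  | succ m ih =>
    by_cases h : b ^ (m + 1) ≤ n
    · have hall : ∀ k ∈ range (m + 1 + 1), (if b ^ k ≤ n then powDiff b k else 0) = powDiff b k :=
        fun k hk ↦ if_pos ((Nat.pow_le_pow_right hb (Nat.lt_succ_iff.mp (mem_range.mp hk))).trans h)
      rwa [sum_congr rfl hall, sum_range_succ_powDiff hb]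
    · simpa [sum_range_succ, h] using ih

lemma sum_range_succ_powDiff_mul_one_sub (hb : 1 < b) (p : ℝ) (m : ℕ) :
    ∑ k ∈ range (m + 1), (powDiff b k : ℝ) * (1 - k * p)
      = (b : ℝ) ^ m * (1 - p * m) + p * ((b : ℝ) ^ m - 1) / ((b : ℝ) - 1) := by
  have hb' : (b : ℝ) - 1 ≠ 0 := sub_ne_zero.mpr (by exact_mod_cast hb.ne')
  induction m with
  | zero => simp [powDiff]
  | succ m ih =>
    rw [sum_range_succ, ih, cast_powDiff_succ hb.le]
    push_cast
    field_simp
    ring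

end powDiff

lemma rpow_le_pow_mul_one_add {b x : ℝ} (hb : 1 ≤ b) {n : ℕ} (hnx : n ≤ x) (hxn : x ≤ n + 1) :
    b ^ x ≤ b ^ n * (1 + (x - n) * (b - 1)) := by
  have hchord : b ^ (x - n) ≤ 1 + (x - n) * (b - 1) := by
    simpa using rpow_one_add_le_one_add_mul_self (s := b - 1) (by linarith)
      (sub_nonneg.mpr hnx) (by linarith)
  calc b ^ x = b ^ n * b ^ (x - n) := by
        rw [← Real.rpow_natCast, ← Real.rpow_add (by linarith), add_sub_cancel]
    _ ≤ b ^ n * (1 + (x - n) * (b - 1)) := by gcongr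

lemma div_le_sum_powDiff_mul_one_sub {b : ℕ} (hb : 1 < b) {p : ℝ} (hp : 0 < p) :
    p * ((b : ℝ) ^ (1 / p) - 1) / ((b : ℝ) - 1)
      ≤ ∑ k ∈ range (⌊1 / p⌋₊ + 1), (powDiff b k : ℝ) * (1 - k * p) := by
  set F := ⌊1 / p⌋₊
  have hb' : (1 : ℝ) < b := by exact_mod_cast hb
  have hb'' : (b : ℝ) - 1 ≠ 0 := by linarith
  have hchord := rpow_le_pow_mul_one_add hb'.le (Nat.floor_le (by positivity) : (F : ℝ) ≤ 1 / p)
    (Nat.lt_floor_add_one (1 / p)).le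
  rw [sum_range_succ_powDiff_mul_one_sub hb]
  calc p * ((b : ℝ) ^ (1 / p) - 1) / ((b : ℝ) - 1)
      ≤ p * ((b : ℝ) ^ F * (1 + (1 / p - F) * ((b : ℝ) - 1)) - 1) / ((b : ℝ) - 1) := by
        gcongr
    _ = (b : ℝ) ^ F * (1 - p * F) + p * ((b : ℝ) ^ F - 1) / ((b : ℝ) - 1) := by
        field_simp
        ring

lemma measure_compl_le_ofReal {α : Type*} [MeasurableSpace α] {μ : Measure α}
    [IsProbabilityMeasure μ] {s : Set α} (hs : NullMeasurableSet s μ) {p : ℝ}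
    (h : ENNReal.ofReal (1 - p) ≤ μ s) : μ sᶜ ≤ ENNReal.ofReal p := by
  rw [prob_compl_eq_one_sub₀ hs, tsub_le_iff_right]
  calc (1 : ℝ≥0∞) = ENNReal.ofReal (p + (1 - p)) := by simp
    _ ≤ ENNReal.ofReal p + ENNReal.ofReal (1 - p) := ENNReal.ofReal_add_le
    _ ≤ ENNReal.ofReal p + μ s := by gcongr

section Tail

variable {Ω : Type*} [MeasurableSpace Ω] {μ : Measure Ω} {X Y : Ω → ℕ}

lemma sum_powDiff_mul_measure_le_lintegral (hX : AEMeasurable X μ) (hXpos : ∀ ω, 1 ≤ X ω)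
    {b : ℕ} (hb : 1 ≤ b) (m : ℕ) :
    ∑ k ∈ range (m + 1), (powDiff b k : ℝ≥0∞) * μ {ω | b ^ k ≤ X ω}
      ≤ ∫⁻ ω, (X ω : ℝ≥0∞) ∂μ := by
  have hA (k : ℕ) : NullMeasurableSet {ω | b ^ k ≤ X ω} μ :=
    hX.nullMeasurable measurableSet_Ici
  have hlayers (ω : Ω) :
      ∑ k ∈ range (m + 1), {ω | b ^ k ≤ X ω}.indicator (fun _ ↦ (powDiff b k : ℝ≥0∞)) ω
        ≤ X ω := by
    simp only [Set.indicator_apply, Set.mem_ofPred_eq]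
    exact_mod_cast sum_range_succ_powDiff_ite_le hb (hXpos ω) m
  calc ∑ k ∈ range (m + 1), (powDiff b k : ℝ≥0∞) * μ {ω | b ^ k ≤ X ω}
      = ∫⁻ ω, ∑ k ∈ range (m + 1),
          {ω | b ^ k ≤ X ω}.indicator (fun _ ↦ (powDiff b k : ℝ≥0∞)) ω ∂μ := by
        rw [lintegral_finsetSum' _ fun k _ ↦ aemeasurable_const.indicator₀ (hA k)]
        simp only [lintegral_indicator_const₀ (hA _)]
    _ ≤ ∫⁻ ω, (X ω : ℝ≥0∞) ∂μ := lintegral_mono hlayers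

lemma ofReal_one_sub_mul_le_measure_pow_le [IsProbabilityMeasure μ] (hid : IdentDistrib X Y μ μ)
    (hXpos : ∀ ω, 1 ≤ X ω) {b : ℕ} {p : ℝ} (hp : 0 ≤ p)
    (hC : μ {ω | X ω = b * Y ω}ᶜ ≤ ENNReal.ofReal p) (k : ℕ) :
    ENNReal.ofReal (1 - k * p) ≤ μ {ω | b ^ k ≤ X ω} := by
  induction k with
  | zero => simp [hXpos]
  | succ k ih =>
    have hstep : μ {ω | b ^ k ≤ X ω} ≤ μ {ω | b ^ (k + 1) ≤ X ω} + ENNReal.ofReal p := by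
      have hsub : {ω | b ^ k ≤ Y ω} ⊆ {ω | b ^ (k + 1) ≤ X ω} ∪ {ω | X ω = b * Y ω}ᶜ := by
        intro ω (hω : b ^ k ≤ Y ω)
        by_cases hc : X ω = b * Y ω
        · left
          show b ^ (k + 1) ≤ X ω
          rw [hc, pow_succ']
          exact Nat.mul_le_mul_left b hω
        · exact Or.inr hc
      calc μ {ω | b ^ k ≤ X ω} = μ {ω | b ^ k ≤ Y ω} := hid.measure_mem_eq measurableSet_Ici
        _ ≤ μ ({ω | b ^ (k + 1) ≤ X ω} ∪ {ω | X ω = b * Y ω}ᶜ) := measure_mono hsub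
        _ ≤ μ {ω | b ^ (k + 1) ≤ X ω} + μ {ω | X ω = b * Y ω}ᶜ := measure_union_le _ _
        _ ≤ μ {ω | b ^ (k + 1) ≤ X ω} + ENNReal.ofReal p := by gcongr
    rw [Nat.cast_succ, show 1 - ((k : ℝ) + 1) * p = 1 - k * p - p by ring,
      ENNReal.ofReal_sub _ hp]
    exact tsub_le_iff_right.mpr (ih.trans hstep)

end Tail

theorem stmt0_general {Ω : Type*} [MeasurableSpace Ω] (μ : Measure Ω) [IsProbabilityMeasure μ]
    (X Y : Ω → ℕ)
    (hXpos : ∀ ω, 1 ≤ X ω)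
    (hid : IdentDistrib X Y μ μ)
    (b : ℕ) (hb : 2 ≤ b) (p : ℝ) (hp0 : 0 < p)
    (hcoup : ENNReal.ofReal (1 - p) ≤ μ {ω | X ω = b * Y ω}) :
    ENNReal.ofReal (p * ((b : ℝ) ^ ((1 : ℝ) / p) - 1) / ((b : ℝ) - 1))
      ≤ ∫⁻ ω, (X ω : ℝ≥0∞) ∂μ := by
  have hb1 : 1 < b := hb
  have hC : μ {ω | X ω = b * Y ω}ᶜ ≤ ENNReal.ofReal p := measure_compl_le_ofReal
    (nullMeasurableSet_eq_fun hid.aemeasurable_fst (hid.aemeasurable_snd.const_mul b)) hcoup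
  calc ENNReal.ofReal (p * ((b : ℝ) ^ ((1 : ℝ) / p) - 1) / ((b : ℝ) - 1))
      ≤ ENNReal.ofReal (∑ k ∈ range (⌊1 / p⌋₊ + 1), (powDiff b k : ℝ) * (1 - k * p)) :=
        ENNReal.ofReal_le_ofReal (div_le_sum_powDiff_mul_one_sub hb1 hp0)
    _ ≤ ∑ k ∈ range (⌊1 / p⌋₊ + 1), ENNReal.ofReal ((powDiff b k : ℝ) * (1 - k * p)) :=
        le_sum_of_subadditive _ ENNReal.ofReal_zero.le (fun _ _ ↦ ENNReal.ofReal_add_le) _ _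
    _ = ∑ k ∈ range (⌊1 / p⌋₊ + 1), (powDiff b k : ℝ≥0∞) * ENNReal.ofReal (1 - k * p) := by
        simp only [ENNReal.ofReal_mul (Nat.cast_nonneg _), ENNReal.ofReal_natCast]
    _ ≤ ∑ k ∈ range (⌊1 / p⌋₊ + 1), (powDiff b k : ℝ≥0∞) * μ {ω | b ^ k ≤ X ω} := by
        gcongr with k
        exact ofReal_one_sub_mul_le_measure_pow_le hid hXpos hp0.le hC k
    _ ≤ ∫⁻ ω, (X ω : ℝ≥0∞) ∂μ :=
        sum_powDiff_mul_measure_le_lintegral hid.aemeasurable_fst hXpos hb1.le _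

/-- If `X` and `Y` are identically distributed positive-integer-valued random
variables coupled so that `P(X = b·Y) ≥ 1 − p`, then `E[X] ≥ p·(b^{1/p} − 1)/(b − 1)`. -/
theorem stmt0 {Ω : Type*} [MeasurableSpace Ω] (μ : Measure Ω) [IsProbabilityMeasure μ]
    (X Y : Ω → ℕ) (hX : Measurable X) (hY : Measurable Y)
    (hXpos : ∀ ω, 1 ≤ X ω) (hYpos : ∀ ω, 1 ≤ Y ω)
    (hid : IdentDistrib X Y μ μ)
    (b : ℕ) (hb : 2 ≤ b) (p : ℝ) (hp0 : 0 < p) (hp1 : p ≤ 1)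
    (hcoup : ENNReal.ofReal (1 - p) ≤ μ {ω | X ω = b * Y ω}) :
    ENNReal.ofReal (p * ((b : ℝ) ^ ((1 : ℝ) / p) - 1) / ((b : ℝ) - 1))
      ≤ ∫⁻ ω, (X ω : ℝ≥0∞) ∂μ :=
  stmt0_general μ X Y hXpos hid b hb p hp0 hcoup
end

section
/- Let (x_i)_{i≥0} and (y_i)_{i≥1} be sequences of positive reals with y_i < 1 for each i. Define z_0 = x_0 and z_i = x_i + (1 − y_i)·z_{i−1} for i > 0. If ∑_i x_i < ∞ and ∑_i y_i = ∞, then z_i → 0 as i → ∞. -/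
/-!
Unrolling the recursion from a fixed index `N` gives, for `n ≥ N`,
`z n ≤ ∑_{N < k ≤ n} x k + (∏_{N < k ≤ n} (1 - y k)) * z N`.
The first term is bounded by the tail of the convergent series `∑ x`, which is small for large `N`;
for fixed `N` the product is at most `exp (-∑_{N < k ≤ n} y k)`, which tends to `0` since `∑ y`
diverges.
-/

open Filter Finset Topology

theorem Real.prod_one_sub_le_exp_neg_sum {ι : Type*} (s : Finset ι) {y : ι → ℝ}
    (hy : ∀ i ∈ s, y i ≤ 1) : ∏ i ∈ s, (1 - y i) ≤ Real.exp (-∑ i ∈ s, y i) := by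
  rw [← sum_neg_distrib, Real.exp_sum]
  exact prod_le_prod (fun i hi => sub_nonneg.2 (hy i hi)) fun i _ => Real.one_sub_le_exp_neg _

theorem tendsto_prod_Ico_one_sub_of_tendsto_sum {y : ℕ → ℝ} (hy : ∀ n, y n ≤ 1)
    (hys : Tendsto (fun n => ∑ k ∈ range n, y k) atTop atTop) (N : ℕ) :
    Tendsto (fun n => ∏ k ∈ Ico N n, (1 - y k)) atTop (𝓝 0) := by
  have hsum : Tendsto (fun n => ∑ k ∈ Ico N n, y k) atTop atTop := by
    refine (tendsto_atTop_add_const_right _ (-∑ k ∈ range N, y k) hys).congr' ?_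
    filter_upwards [eventually_ge_atTop N] with n hn
    rw [sum_Ico_eq_sub _ hn, sub_eq_add_neg]
  exact squeeze_zero (fun n => prod_nonneg fun k _ => sub_nonneg.2 (hy k))
    (fun n => Real.prod_one_sub_le_exp_neg_sum _ fun k _ => hy k)
    (Real.tendsto_exp_neg_atTop_nhds_zero.comp hsum)

theorem le_sum_Ico_add_prod_Ico_mul {u a b : ℕ → ℝ} (ha₀ : ∀ n, 0 ≤ a n) (ha₁ : ∀ n, a n ≤ 1)
    (hb : ∀ n, 0 ≤ b n) (hu : ∀ n, u (n + 1) ≤ b n + a n * u n) {N n : ℕ} (hNn : N ≤ n) :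
    u n ≤ ∑ k ∈ Ico N n, b k + (∏ k ∈ Ico N n, a k) * u N := by
  induction n, hNn using Nat.le_induction with
  | base => simp
  | succ n hNn ih =>
    have hS : 0 ≤ ∑ k ∈ Ico N n, b k := sum_nonneg fun k _ => hb k
    rw [sum_Ico_succ_top hNn, prod_Ico_succ_top hNn]
    calc u (n + 1) ≤ b n + a n * (∑ k ∈ Ico N n, b k + (∏ k ∈ Ico N n, a k) * u N) :=
          (hu n).trans (by gcongr; exact ha₀ n)
      _ ≤ _ := by nlinarith [ha₁ n]

theorem tendsto_zero_of_le_add_one_sub_mul {u b y : ℕ → ℝ} (hu : ∀ n, 0 ≤ u n)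
    (hb : ∀ n, 0 ≤ b n) (hbs : Summable b) (hy₀ : ∀ n, 0 ≤ y n) (hy₁ : ∀ n, y n ≤ 1)
    (hys : Tendsto (fun n => ∑ k ∈ range n, y k) atTop atTop)
    (hrec : ∀ n, u (n + 1) ≤ b n + (1 - y n) * u n) : Tendsto u atTop (𝓝 0) := by
  have htail : Tendsto (fun N => ∑' k, b k - ∑ k ∈ range N, b k) atTop (𝓝 0) := by
    simpa using hbs.hasSum.tendsto_sum_nat.const_sub (∑' k, b k)
  refine tendsto_order.2 ⟨fun ε hε => .of_forall fun n => hε.trans_le (hu n), fun ε hε => ?_⟩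
  obtain ⟨N, hN⟩ := (htail.eventually (gt_mem_nhds (half_pos hε))).exists
  have hprod : Tendsto (fun n => (∏ k ∈ Ico N n, (1 - y k)) * u N) atTop (𝓝 0) := by
    simpa using (tendsto_prod_Ico_one_sub_of_tendsto_sum hy₁ hys N).mul_const (u N)
  filter_upwards [eventually_ge_atTop N, hprod.eventually (gt_mem_nhds (half_pos hε))]
    with n hNn hn
  calc u n ≤ ∑ k ∈ Ico N n, b k + (∏ k ∈ Ico N n, (1 - y k)) * u N :=
        le_sum_Ico_add_prod_Ico_mul (fun k => sub_nonneg.2 (hy₁ k)) (fun k => by linarith [hy₀ k])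
          hb hrec hNn
    _ ≤ (∑' k, b k - ∑ k ∈ range N, b k) + (∏ k ∈ Ico N n, (1 - y k)) * u N := by
        rw [sum_Ico_eq_sub _ hNn]
        gcongr
        exact hbs.sum_le_tsum _ fun k _ => hb k
    _ < ε / 2 + ε / 2 := add_lt_add hN hn
    _ = ε := add_halves ε

/-- If `(x_i)` and `(y_i)` are sequences of positive reals with `y_i < 1`,
`z_0 = x_0`, `z_i = x_i + (1 − y_i) z_{i−1}`, `∑ x_i < ∞` and `∑ y_i = ∞`, then `z_i → 0`. -/
theorem stmt1 (x y z : ℕ → ℝ)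
    (hx : ∀ i, 0 < x i) (hy : ∀ i, 1 ≤ i → 0 < y i) (hy1 : ∀ i, 1 ≤ i → y i < 1)
    (hz0 : z 0 = x 0) (hzrec : ∀ i, 0 < i → z i = x i + (1 - y i) * z (i - 1))
    (hxsum : Summable x)
    (hysum : Tendsto (fun n => ∑ i ∈ Finset.range n, y i) atTop atTop) :
    Tendsto z atTop (nhds 0) := by
  have hrec (n : ℕ) : z (n + 1) = x (n + 1) + (1 - y (n + 1)) * z n := by
    simpa using hzrec (n + 1) n.succ_pos
  have hz (n : ℕ) : 0 ≤ z n := by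
    induction n with
    | zero => exact hz0 ▸ (hx 0).le
    | succ n ih => rw [hrec]; nlinarith [hx (n + 1), hy1 (n + 1) n.succ_pos]
  have hys : Tendsto (fun n => ∑ k ∈ range n, y (k + 1)) atTop atTop := by
    refine (tendsto_atTop_add_const_right _ (-y 0) (hysum.comp (tendsto_add_atTop_nat 1))).congr
      fun n => ?_
    simp [sum_range_succ']
  exact tendsto_zero_of_le_add_one_sub_mul hz (fun n => (hx (n + 1)).le)
    ((summable_nat_add_iff 1).2 hxsum) (fun n => (hy (n + 1) n.succ_pos).le)
    (fun n => (hy1 (n + 1) n.succ_pos).le) hys fun n => (hrec n).le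
end

section
/- Fix an integer b ≥ 2 and set ζ_k = ∑_{j≥k} (b−1)² / ((b^j − 1)(b^{j+1} − 1)) for k ≥ 1. Then ζ_{i+1} < ζ_i / b² for every i ≥ 1. -/
/-- `ζ_k = ∑_{j ≥ k} (b−1)² / ((b^j − 1)(b^{j+1} − 1))`, written as a sum over `j = k + i`. -/
noncomputable def zeta (b k : ℕ) : ℝ :=
  ∑' i : ℕ, ((b : ℝ) - 1) ^ 2 / (((b : ℝ) ^ (k + i) - 1) * ((b : ℝ) ^ (k + i + 1) - 1))

/-! For `j ≥ 1` the term `(x−1)² / ((x^j − 1)(x^{j+1} − 1))` decays faster than `x^{-2j}`: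
shifting `j` by one divides it by more than `x²`, because `(x^j − 1) x² = x^{j+2} − x² < x^{j+2} − 1`.
Summing this termwise comparison gives the theorem; it also gives summability by the ratio test. -/

open Filter

noncomputable def zetaTerm (x : ℝ) (j : ℕ) : ℝ :=
  (x - 1) ^ 2 / ((x ^ j - 1) * (x ^ (j + 1) - 1))

lemma zetaTerm_pos {x : ℝ} (hx : 1 < x) {j : ℕ} (hj : j ≠ 0) : 0 < zetaTerm x j := by
  have hxj : 0 < x ^ j - 1 := sub_pos.2 (one_lt_pow₀ hx hj)
  have hxj' : 0 < x ^ (j + 1) - 1 := sub_pos.2 (one_lt_pow₀ hx j.succ_ne_zero)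
  have hx1 : 0 < x - 1 := sub_pos.2 hx
  unfold zetaTerm
  positivity

lemma zetaTerm_succ_lt {x : ℝ} (hx : 1 < x) {j : ℕ} (hj : j ≠ 0) :
    zetaTerm x (j + 1) < zetaTerm x j / x ^ 2 := by
  have hxj : 0 < x ^ j - 1 := sub_pos.2 (one_lt_pow₀ hx hj)
  have hxj' : 0 < x ^ (j + 1) - 1 := sub_pos.2 (one_lt_pow₀ hx j.succ_ne_zero)
  have hx2 : 1 < x ^ 2 := one_lt_pow₀ hx two_ne_zero
  have hshift : (x ^ j - 1) * x ^ 2 < x ^ (j + 1 + 1) - 1 := by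
    rw [sub_mul, one_mul, ← pow_add]
    linarith
  unfold zetaTerm
  rw [div_div]
  refine div_lt_div_of_pos_left (pow_pos (sub_pos.2 hx) 2) (by positivity) ?_
  calc (x ^ j - 1) * (x ^ (j + 1) - 1) * x ^ 2
      = (x ^ j - 1) * x ^ 2 * (x ^ (j + 1) - 1) := by ring
    _ < (x ^ (j + 1 + 1) - 1) * (x ^ (j + 1) - 1) := by gcongr
    _ = (x ^ (j + 1) - 1) * (x ^ (j + 1 + 1) - 1) := mul_comm _ _

lemma summable_zetaTerm_add {x : ℝ} (hx : 1 < x) {k : ℕ} (hk : k ≠ 0) :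
    Summable fun j ↦ zetaTerm x (k + j) := by
  refine summable_of_ratio_norm_eventually_le (r := (x ^ 2)⁻¹)
    (inv_lt_one_of_one_lt₀ (one_lt_pow₀ hx two_ne_zero)) (Eventually.of_forall fun j ↦ ?_)
  have hkj : k + j ≠ 0 := by omega
  rw [Real.norm_of_nonneg (zetaTerm_pos hx (by omega)).le,
    Real.norm_of_nonneg (zetaTerm_pos hx hkj).le, inv_mul_eq_div, ← add_assoc]
  exact (zetaTerm_succ_lt hx hkj).le

lemma zeta_eq_tsum_zetaTerm (b k : ℕ) : zeta b k = ∑' j, zetaTerm b (k + j) := rfl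

/-- For an integer `b ≥ 2`, `ζ_{i+1} < ζ_i / b²` for every `i ≥ 1`. -/
theorem stmt4 (b : ℕ) (hb : 2 ≤ b) (i : ℕ) (hi : 1 ≤ i) :
    zeta b (i + 1) < zeta b i / (b : ℝ) ^ 2 := by
  have hx : (1 : ℝ) < b := by exact_mod_cast hb
  have hi0 : i ≠ 0 := Nat.one_le_iff_ne_zero.1 hi
  have hterm (j : ℕ) : zetaTerm b (i + 1 + j) < zetaTerm b (i + j) / (b : ℝ) ^ 2 := by
    rw [add_right_comm]
    exact zetaTerm_succ_lt hx (by omega)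
  rw [zeta_eq_tsum_zetaTerm, zeta_eq_tsum_zetaTerm, ← tsum_div_const]
  exact (summable_zetaTerm_add hx (Nat.succ_ne_zero i)).tsum_lt_tsum (fun j ↦ (hterm j).le)
    (hterm 0) ((summable_zetaTerm_add hx hi0).div_const _)
end

section
/- Let T be a finite b-ary tree and G a graph on the leaves of T. Suppose for some fixed k: (i) every set of b siblings in T is either strongly linked or weakly linked by G; (ii) for any two sets of siblings which are k-cousins, at least one is strongly linked; (iii) every set of siblings within the top k layers of T is strongly linked. Then G is connected. -/
/- We model a finite `b`-ary tree as a prefix-closed set `S` of lists over `Fin b`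
(the root is the empty list, children of `v` are `v ++ [i]`), in which every internal
vertex has all `b` children. Ancestors are prefixes. -/

/-- `v` is a leaf of the tree `S`. -/
def IsLeaf {b : ℕ} (S : Set (List (Fin b))) (v : List (Fin b)) : Prop :=
  v ∈ S ∧ ∀ i : Fin b, v ++ [i] ∉ S

/-- `x` and `y` are linked by `G`: some leaf-descendant of `x` is adjacent in `G`
to some leaf-descendant of `y`. -/
def Linked {b : ℕ} (S : Set (List (Fin b))) (G : SimpleGraph {v : List (Fin b) // IsLeaf S v})
    (x y : List (Fin b)) : Prop :=
  ∃ x' y' : {v : List (Fin b) // IsLeaf S v}, x <+: x'.1 ∧ y <+: y'.1 ∧ G.Adj x' y'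

/-- The auxiliary graph `H_X` on the set `X = {p ++ [i] : i}` of children of `p`,
with edges between linked pairs. -/
def SibGraph {b : ℕ} (S : Set (List (Fin b)))
    (G : SimpleGraph {v : List (Fin b) // IsLeaf S v}) (p : List (Fin b)) :
    SimpleGraph (Fin b) :=
  SimpleGraph.fromRel (fun i j => Linked S G (p ++ [i]) (p ++ [j]))

/-- The set of siblings `{p ++ [i] : i}` is strongly linked: `H_X` is connected. -/
def StronglyLinked {b : ℕ} (S : Set (List (Fin b)))
    (G : SimpleGraph {v : List (Fin b) // IsLeaf S v}) (p : List (Fin b)) : Prop :=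
  (SibGraph S G p).Connected

/-- `z` is a `k`-uncle of `w`: some sibling of `z` is an ancestor of `w` at distance `≤ k`. -/
def KUncle {b : ℕ} (k : ℕ) (z w : List (Fin b)) : Prop :=
  ∃ (p : List (Fin b)) (i j : Fin b), i ≠ j ∧ z = p ++ [i] ∧ (p ++ [j]) <+: w ∧
    w.length ≤ (p ++ [j]).length + k

/-- `v` and `w` are `k`-cousins: some ancestor `w'` of `w` at distance `≤ k` is a
`k`-uncle of `v`. -/
def KCousins {b : ℕ} (k : ℕ) (v w : List (Fin b)) : Prop :=
  ∃ w' : List (Fin b), w' <+: w ∧ w.length ≤ w'.length + k ∧ KUncle k w' v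

/-- The set of siblings `{p ++ [i] : i}` is weakly linked: `H_X` has exactly two
components, and there are `x_i`, `x_j` in different components and a common `k`-uncle `z`
linked to both. -/
def WeaklyLinked {b : ℕ} (S : Set (List (Fin b)))
    (G : SimpleGraph {v : List (Fin b) // IsLeaf S v}) (k : ℕ) (p : List (Fin b)) : Prop :=
  ∃ i j : Fin b, ¬ (SibGraph S G p).Reachable i j ∧
    (∀ m, (SibGraph S G p).Reachable m i ∨ (SibGraph S G p).Reachable m j) ∧
    ∃ z ∈ S, KUncle k z (p ++ [i]) ∧ KUncle k z (p ++ [j]) ∧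
      Linked S G z (p ++ [i]) ∧ Linked S G z (p ++ [j])

/-! A vertex is *unsplit* when all leaves below it lie in one component of `G`. Take a deepest
split vertex `p`: its children are unsplit, so `p` cannot be strongly linked, hence it is weakly
linked through some `k`-uncle `z`. If `z` were unsplit it would join the two components of
`H_p`, so `z` is split too, and the deepest split vertex `w` below `z` is again not strongly
linked. Since `w` is no deeper than `p`, the sibling sets of `p` and `w` are `k`-cousins through
`z`, contradicting (ii). -/

namespace LeafTree

def Unsplit {b : ℕ} (S : Set (List (Fin b))) (G : SimpleGraph {v : List (Fin b) // IsLeaf S v})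
    (v : List (Fin b)) : Prop :=
  ∀ x y : {u : List (Fin b) // IsLeaf S u}, v <+: x.1 → v <+: y.1 → G.Reachable x y

variable {b k : ℕ} {S : Set (List (Fin b))} {G : SimpleGraph {v : List (Fin b) // IsLeaf S v}}
  {p v w : List (Fin b)}

theorem eq_of_isLeaf_of_prefix (hclosed : ∀ v ∈ S, ∀ u : List (Fin b), u <+: v → u ∈ S)
    (hv : IsLeaf S v) {x : List (Fin b)} (hx : IsLeaf S x) (hvx : v <+: x) : x = v := by
  obtain ⟨t, rfl⟩ := hvx
  cases t with
  | nil => simp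
  | cons i t => exact absurd (hclosed _ hx.1 (v ++ [i]) ⟨t, by simp⟩) (hv.2 i)

theorem exists_child_prefix_of_isLeaf (hp : ∃ i : Fin b, p ++ [i] ∈ S) {x : List (Fin b)}
    (hx : IsLeaf S x) (hpx : p <+: x) : ∃ i : Fin b, p ++ [i] <+: x := by
  obtain ⟨t, rfl⟩ := hpx
  cases t with
  | nil =>
    obtain ⟨i, hi⟩ := hp
    exact absurd (by simpa using hi) (hx.2 i)
  | cons i t => exact ⟨i, t, by simp⟩

theorem exists_isLeaf_prefix (hfin : S.Finite) (hv : v ∈ S) :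
    ∃ x : {u : List (Fin b) // IsLeaf S u}, v <+: x.1 := by
  obtain ⟨w, ⟨hwS, hvw⟩, hmax⟩ := Set.Finite.exists_maximalFor List.length
    {u | u ∈ S ∧ v <+: u} (hfin.subset fun _ hu => hu.1) ⟨v, hv, List.prefix_refl v⟩
  refine ⟨⟨w, hwS, fun i hi => ?_⟩, hvw⟩
  have := hmax ⟨hi, hvw.trans (List.prefix_append w [i])⟩ (by simp)
  simp at this

theorem unsplit_of_not_mem (hclosed : ∀ v ∈ S, ∀ u : List (Fin b), u <+: v → u ∈ S)
    (hv : v ∉ S) : Unsplit S G v :=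
  fun x _ hx _ => absurd (hclosed _ x.2.1 v hx) hv

theorem unsplit_of_isLeaf (hclosed : ∀ v ∈ S, ∀ u : List (Fin b), u <+: v → u ∈ S)
    (hv : IsLeaf S v) : Unsplit S G v := by
  intro x y hx hy
  have hxy : x = y := Subtype.ext <|
    (eq_of_isLeaf_of_prefix hclosed hv x.2 hx).trans (eq_of_isLeaf_of_prefix hclosed hv y.2 hy).symm
  rw [hxy]

theorem mem_of_not_unsplit (hclosed : ∀ v ∈ S, ∀ u : List (Fin b), u <+: v → u ∈ S)
    (hv : ¬Unsplit S G v) : v ∈ S :=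
  not_not.1 fun h => hv (unsplit_of_not_mem hclosed h)

theorem exists_child_mem_of_not_unsplit
    (hclosed : ∀ v ∈ S, ∀ u : List (Fin b), u <+: v → u ∈ S) (hv : ¬Unsplit S G v) : ∃ i : Fin b, v ++ [i] ∈ S := by
  by_contra! h
  exact hv (unsplit_of_isLeaf hclosed ⟨mem_of_not_unsplit hclosed hv, h⟩)

theorem unsplit_of_children (hclosed : ∀ v ∈ S, ∀ u : List (Fin b), u <+: v → u ∈ S)
    (h : ∀ (i j : Fin b) (x y : {u : List (Fin b) // IsLeaf S u}),
      p ++ [i] <+: x.1 → p ++ [j] <+: y.1 → G.Reachable x y) :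
    Unsplit S G p := by
  by_contra hp
  refine hp fun x y hx hy => ?_
  have hint := exists_child_mem_of_not_unsplit hclosed hp
  obtain ⟨i, hxi⟩ := exists_child_prefix_of_isLeaf hint x.2 hx
  obtain ⟨j, hyj⟩ := exists_child_prefix_of_isLeaf hint y.2 hy
  exact h i j x y hxi hyj

theorem exists_deepest_not_unsplit (hfin : S.Finite)
    (hclosed : ∀ v ∈ S, ∀ u : List (Fin b), u <+: v → u ∈ S) (hv : ¬Unsplit S G v) :
    ∃ w, v <+: w ∧ ¬Unsplit S G w ∧
      ∀ u, v <+: u → ¬Unsplit S G u → u.length ≤ w.length := by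
  obtain ⟨w, ⟨hvw, hw⟩, hmax⟩ := Set.Finite.exists_maximalFor List.length
    {u | v <+: u ∧ ¬Unsplit S G u} (hfin.subset fun _ hu => mem_of_not_unsplit hclosed hu.2)
    ⟨v, List.prefix_refl v, hv⟩
  exact ⟨w, hvw, hw, fun u hvu hu => (le_total _ _).elim (hmax ⟨hvu, hu⟩) id⟩

theorem unsplit_append_of_maximal
    (hmax : ∀ u, w <+: u → ¬Unsplit S G u → u.length ≤ w.length) (i : Fin b) :
    Unsplit S G (w ++ [i]) := by
  by_contra h
  have := hmax _ (List.prefix_append w [i]) h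
  simp at this

theorem reachable_of_sibGraph_reachable (hch : ∀ i : Fin b, Unsplit S G (p ++ [i]))
    {i j : Fin b} (h : (SibGraph S G p).Reachable i j) {x y : {u : List (Fin b) // IsLeaf S u}}
    (hx : p ++ [i] <+: x.1) (hy : p ++ [j] <+: y.1) : G.Reachable x y := by
  obtain ⟨walk⟩ := h
  induction walk generalizing x with
  | nil => exact hch _ x y hx hy
  | @cons i m j hadj walk ih =>
    rw [SibGraph, SimpleGraph.fromRel_adj] at hadj
    rcases hadj.2 with ⟨x', y', hx', hy', hG⟩ | ⟨y', x', hy', hx', hG⟩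
    · exact ((hch i x x' hx hx').trans hG.reachable).trans (ih hy' hy)
    · exact ((hch i x x' hx hx').trans hG.reachable.symm).trans (ih hy' hy)

theorem sibGraph_reachable_of_linked {a i : Fin b} (h : Linked S G (p ++ [a]) (p ++ [i])) :
    (SibGraph S G p).Reachable a i := by
  by_cases hai : a = i
  · exact hai ▸ SimpleGraph.Reachable.refl a
  · exact SimpleGraph.Adj.reachable ((SimpleGraph.fromRel_adj _ _ _).2 ⟨hai, Or.inl h⟩)

theorem unsplit_of_stronglyLinked (hclosed : ∀ v ∈ S, ∀ u : List (Fin b), u <+: v → u ∈ S)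
    (hch : ∀ i : Fin b, Unsplit S G (p ++ [i])) (hs : StronglyLinked S G p) : Unsplit S G p :=
  unsplit_of_children hclosed fun i j _ _ hx hy =>
    reachable_of_sibGraph_reachable hch (hs.preconnected i j) hx hy

theorem exists_cousin_of_weaklyLinked (hfin : S.Finite)
    (hclosed : ∀ v ∈ S, ∀ u : List (Fin b), u <+: v → u ∈ S) (hp : ¬Unsplit S G p)
    (hdeep : ∀ u, ¬Unsplit S G u → u.length ≤ p.length) (hweak : WeaklyLinked S G k p) :
    ∃ w, w ≠ p ∧ ¬Unsplit S G w ∧ (∀ i : Fin b, Unsplit S G (w ++ [i])) ∧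
      ∃ i j : Fin b, KCousins k (p ++ [i]) (w ++ [j]) := by
  have hch : ∀ i : Fin b, Unsplit S G (p ++ [i]) := unsplit_append_of_maximal fun u _ => hdeep u
  obtain ⟨i, j, hij, hcover, _, -, ⟨q, a, c, hac, rfl, hqc, hqlen⟩, -, hzi, hzj⟩ := hweak
  rcases List.prefix_concat_iff.1 hqc with hqp | hqcp
  · obtain rfl : q = p := (List.append_inj' hqp rfl).1
    exact hij.elim <|
      (sibGraph_reachable_of_linked hzi).symm.trans (sibGraph_reachable_of_linked hzj)
  have hz : ¬Unsplit S G (q ++ [a]) := by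
    intro hz
    obtain ⟨u, x, hu, hx, hux⟩ := hzi
    obtain ⟨u', y, hu', hy, huy⟩ := hzj
    have hxy : G.Reachable x y := (hux.reachable.symm.trans (hz u u' hu hu')).trans huy.reachable
    have to_x : ∀ (m : Fin b) (x' : {u : List (Fin b) // IsLeaf S u}),
        p ++ [m] <+: x'.1 → G.Reachable x' x := fun m x' hx' =>
      (hcover m).elim (fun hm => reachable_of_sibGraph_reachable hch hm hx' hx)
        (fun hm => (reachable_of_sibGraph_reachable hch hm hx' hy).trans hxy.symm)
    exact hp (unsplit_of_children hclosed fun m n x' y' hx' hy' =>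
      (to_x m x' hx').trans (to_x n y' hy').symm)
  obtain ⟨w, hzw, hw, hwmax⟩ := exists_deepest_not_unsplit hfin hclosed hz
  refine ⟨w, ?_, hw, unsplit_append_of_maximal fun u hwu => hwmax u (hzw.trans hwu), i, i,
    q ++ [a], hzw.trans (List.prefix_append w [i]), ?_, q, a, c, hac, rfl, hqc, hqlen⟩
  · -- `q ++ [a]` would be an ancestor of `p` of the same length as `q ++ [c]`
    rintro rfl
    have := (List.prefix_of_prefix_length_le hzw hqcp (by simp)).eq_of_length (by simp)
    exact hac (by simpa using this)
  · have := hdeep w hw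
    simp only [List.length_append, List.length_singleton] at hqlen ⊢
    omega

end LeafTree

open LeafTree

theorem stmt17_general (b k : ℕ)
    (S : Set (List (Fin b))) (hfin : S.Finite)
    (hroot : ([] : List (Fin b)) ∈ S)
    (hclosed : ∀ v ∈ S, ∀ u : List (Fin b), u <+: v → u ∈ S)
    (G : SimpleGraph {v : List (Fin b) // IsLeaf S v})
    (h1 : ∀ p ∈ S, (∃ i : Fin b, p ++ [i] ∈ S) →
      StronglyLinked S G p ∨ WeaklyLinked S G k p)
    (h2 : ∀ p ∈ S, ∀ q ∈ S, p ≠ q →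
      (∃ i : Fin b, p ++ [i] ∈ S) → (∃ i : Fin b, q ++ [i] ∈ S) →
      (∃ i j : Fin b, KCousins k (p ++ [i]) (q ++ [j])) →
      StronglyLinked S G p ∨ StronglyLinked S G q) :
    G.Connected := by
  obtain ⟨x₀, -⟩ := exists_isLeaf_prefix hfin hroot
  refine (SimpleGraph.connected_iff G).2 ⟨fun x y => ?_, ⟨x₀⟩⟩
  suffices hroot_unsplit : Unsplit S G [] from
    hroot_unsplit x y List.nil_prefix List.nil_prefix
  by_contra hroot_split
  obtain ⟨p, -, hp, hdeep⟩ := exists_deepest_not_unsplit hfin hclosed hroot_split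
  replace hdeep : ∀ u, ¬Unsplit S G u → u.length ≤ p.length :=
    fun u => hdeep u List.nil_prefix
  have hch := unsplit_append_of_maximal fun u _ => hdeep u
  have hpS := mem_of_not_unsplit hclosed hp
  have hpint := exists_child_mem_of_not_unsplit hclosed hp
  have hp_weak : WeaklyLinked S G k p :=
    (h1 p hpS hpint).resolve_left fun hs => hp (unsplit_of_stronglyLinked hclosed hch hs)
  obtain ⟨w, hwp, hw, hwch, hcousin⟩ :=
    exists_cousin_of_weaklyLinked hfin hclosed hp hdeep hp_weak
  rcases h2 p hpS w (mem_of_not_unsplit hclosed hw) hwp.symm hpint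
      (exists_child_mem_of_not_unsplit hclosed hw) hcousin with hs | hs
  · exact hp (unsplit_of_stronglyLinked hclosed hch hs)
  · exact hw (unsplit_of_stronglyLinked hclosed hwch hs)

/-- if (i) every set of siblings is strongly or weakly linked by `G`,
(ii) of any two sets of siblings which are `k`-cousins at least one is strongly linked,
and (iii) every set of siblings within the top `k` layers is strongly linked,
then `G` (a graph on the leaves of the finite `b`-ary tree `S`) is connected. -/
theorem stmt17 (b k : ℕ) (hb : 2 ≤ b)
    (S : Set (List (Fin b))) (hfin : S.Finite)
    (hroot : ([] : List (Fin b)) ∈ S)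
    (hclosed : ∀ v ∈ S, ∀ u : List (Fin b), u <+: v → u ∈ S)
    (hfull : ∀ v ∈ S, ∀ i j : Fin b, v ++ [i] ∈ S → v ++ [j] ∈ S)
    (G : SimpleGraph {v : List (Fin b) // IsLeaf S v})
    (h1 : ∀ p ∈ S, (∃ i : Fin b, p ++ [i] ∈ S) →
      StronglyLinked S G p ∨ WeaklyLinked S G k p)
    (h2 : ∀ p ∈ S, ∀ q ∈ S, p ≠ q →
      (∃ i : Fin b, p ++ [i] ∈ S) → (∃ i : Fin b, q ++ [i] ∈ S) →
      (∃ i j : Fin b, KCousins k (p ++ [i]) (q ++ [j])) →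
      StronglyLinked S G p ∨ StronglyLinked S G q)
    (h3 : ∀ p ∈ S, (∃ i : Fin b, p ++ [i] ∈ S) → p.length + 1 ≤ k →
      StronglyLinked S G p) :
    G.Connected :=
  stmt17_general b k S hfin hroot hclosed G h1 h2
end
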